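/- For k ≥ ℓ ≥ 0, the generating function by size of self-conjugate partitions in H(k,ℓ) but not in H(k-1,ℓ-1) is u^{2kℓ - ℓ^2} · ∏_{i=1}^{k-ℓ} (1 + u^{2i-1}) · ∏_{i=1}^{ℓ} (1 - u^{2i})^{-1}. -/

import Mathlib

/-- A partition, recorded by its (0-indexed) parts: `parts i` is the
`(i+1)`-st part `λ_{i+1}`. -/
structure PartitionSeq where
  parts : ℕ →₀ ℕ
  antitone : ∀ ⦃i j : ℕ⦄, i ≤ j → parts j ≤ parts i

/-- The size `|λ|` of a partition: the sum of its parts. -/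
def psize (lam : PartitionSeq) : ℕ := lam.parts.sum fun _ m => m

/-- The conjugate partition: `pconj lam j` is the `(j+1)`-st part `λ'_{j+1}`
of the conjugate, i.e. the number of parts of `λ` that are `> j`. -/
def pconj (lam : PartitionSeq) (j : ℕ) : ℕ :=
  (lam.parts.support.filter fun i => j < lam.parts i).card

open PowerSeries

namespace SCGF

theorem pext {a b : PartitionSeq} (h : ∀ i, a.parts i = b.parts i) : a = b := by
  cases a; cases b
  simp only [PartitionSeq.mk.injEq]
  exact Finsupp.ext h

/-- Build a partition from an antitone, eventually-zero function. -/
def ofFun (f : ℕ → ℕ) (hf : ∀ ⦃i j : ℕ⦄, i ≤ j → f j ≤ f i) (N : ℕ)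
    (hN : ∀ i, N ≤ i → f i = 0) : PartitionSeq :=
  ⟨⟨(Finset.range N).filter (fun i => f i ≠ 0), f, by
      intro a
      simp only [Finset.mem_filter, Finset.mem_range]
      constructor
      · exact fun h => h.2
      · intro h
        refine ⟨?_, h⟩
        by_contra hc
        exact h (hN a (le_of_not_gt hc))⟩, hf⟩

@[simp] theorem parts_ofFun (f : ℕ → ℕ) (hf) (N : ℕ) (hN) :
    (ofFun f hf N hN).parts i = f i := rfl

theorem psize_eq_sum_range (lam : PartitionSeq) (N : ℕ)
    (h : ∀ i, N ≤ i → lam.parts i = 0) :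
    psize lam = ∑ i ∈ Finset.range N, lam.parts i := by
  rw [psize, Finsupp.sum]
  refine Finset.sum_subset ?_ ?_
  · intro i hi
    rw [Finset.mem_range]
    by_contra hc
    exact (Finsupp.mem_support_iff.mp hi) (h i (le_of_not_gt hc))
  · intro i _ hi
    exact Finsupp.notMem_support_iff.mp hi

theorem parts_le_psize (lam : PartitionSeq) (i : ℕ) : lam.parts i ≤ psize lam := by
  by_cases h : lam.parts i = 0
  · simp [h]
  · exact Finset.single_le_sum (fun _ _ => Nat.zero_le _)
      (Finsupp.mem_support_iff.mpr h)

theorem parts_eq_zero_of_psize_le (lam : PartitionSeq) {n i : ℕ}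
    (h : psize lam ≤ n) (hi : n ≤ i) : lam.parts i = 0 := by
  by_contra hc
  have h1 : ∀ t ∈ Finset.range (i + 1), 1 ≤ lam.parts t := by
    intro t ht
    have := lam.antitone (Nat.le_of_lt_succ (Finset.mem_range.mp ht))
    omega
  have hsub : Finset.range (i + 1) ⊆ lam.parts.support := by
    intro t ht
    exact Finsupp.mem_support_iff.mpr (by have := h1 t ht; omega)
  have : i + 1 ≤ psize lam := by
    calc i + 1 = ∑ _t ∈ Finset.range (i+1), 1 := by simp
    _ ≤ ∑ t ∈ Finset.range (i+1), lam.parts t := Finset.sum_le_sum h1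
    _ ≤ ∑ t ∈ lam.parts.support, lam.parts t := Finset.sum_le_sum_of_subset hsub
    _ = psize lam := rfl
  omega

theorem lt_pconj_iff (lam : PartitionSeq) (j m : ℕ) :
    m < pconj lam j ↔ j < lam.parts m := by
  rw [pconj]
  constructor
  · intro h
    by_contra hc
    push_neg at hc
    have hsub : (lam.parts.support.filter fun i => j < lam.parts i) ⊆
        Finset.range m := by
      intro t ht
      simp only [Finset.mem_filter] at ht
      rw [Finset.mem_range]
      by_contra htc
      have := lam.antitone (le_of_not_gt htc)
      omega
    have := Finset.card_le_card hsub
    simp at this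
    omega
  · intro h
    have hsub : Finset.range (m + 1) ⊆
        (lam.parts.support.filter fun i => j < lam.parts i) := by
      intro t ht
      have hle := lam.antitone (Nat.le_of_lt_succ (Finset.mem_range.mp ht))
      simp only [Finset.mem_filter, Finsupp.mem_support_iff]
      constructor
      · omega
      · omega
    have := Finset.card_le_card hsub
    simp at this
    omega

theorem pconj_eq_zero (lam : PartitionSeq) {j : ℕ} (h : lam.parts 0 ≤ j) :
    pconj lam j = 0 := by
  by_contra hc
  have : 0 < pconj lam j := Nat.pos_of_ne_zero hc
  rw [lt_pconj_iff] at this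
  omega

theorem pconj_anti (lam : PartitionSeq) : ∀ ⦃i j : ℕ⦄, i ≤ j →
    pconj lam j ≤ pconj lam i := by
  intro i j hij
  apply Finset.card_le_card
  intro t ht
  simp only [Finset.mem_filter] at *
  exact ⟨ht.1, by omega⟩

/-- symmetric self-conjugacy condition -/
def SSym (lam : PartitionSeq) : Prop := ∀ i j, j < lam.parts i ↔ i < lam.parts j

theorem nat_eq_of_lt_iff {a b : ℕ} (h : ∀ m, m < a ↔ m < b) : a = b := by
  by_contra hc
  rcases Nat.lt_or_ge a b with h1 | h1
  · have := (h a).mpr h1; omega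
  · have : b < a := by omega
    have := (h b).mp this; omega

theorem sc_iff (lam : PartitionSeq) :
    (∀ j, pconj lam j = lam.parts j) ↔ SSym lam := by
  constructor
  · intro h i j
    rw [← h j, lt_pconj_iff]
  · intro h j
    apply nat_eq_of_lt_iff
    intro m
    rw [lt_pconj_iff, h]

def conj (lam : PartitionSeq) : PartitionSeq :=
  ofFun (pconj lam) (pconj_anti lam) (lam.parts 0)
    (fun _ h => pconj_eq_zero lam h)

@[simp] theorem parts_conj (lam : PartitionSeq) (i : ℕ) :
    (conj lam).parts i = pconj lam i := rfl

theorem range_filter_lt {c M : ℕ} (h : c ≤ M) :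
    ((Finset.range M).filter (fun j => j < c)) = Finset.range c := by
  ext t
  simp only [Finset.mem_filter, Finset.mem_range]
  omega

theorem pconj_eq_card_range (lam : PartitionSeq) (j M : ℕ)
    (hM : ∀ i, M ≤ i → lam.parts i = 0) :
    pconj lam j = ((Finset.range M).filter fun i => j < lam.parts i).card := by
  rw [pconj]
  congr 1
  ext t
  simp only [Finset.mem_filter, Finsupp.mem_support_iff, Finset.mem_range]
  constructor
  · rintro ⟨h1, h2⟩
    refine ⟨?_, h2⟩
    by_contra hc
    exact h1 (hM t (le_of_not_gt hc))
  · rintro ⟨h1, h2⟩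
    exact ⟨by omega, h2⟩

theorem psize_conj (lam : PartitionSeq) : psize (conj lam) = psize lam := by
  obtain ⟨M, hM⟩ : ∃ M, M = psize lam := ⟨_, rfl⟩
  have hvan : ∀ i, M ≤ i → lam.parts i = 0 :=
    fun i hi => parts_eq_zero_of_psize_le lam hM.ge hi
  have hvanc : ∀ i, M ≤ i → (conj lam).parts i = 0 := by
    intro i hi
    exact pconj_eq_zero lam (le_trans (parts_le_psize lam 0) (hM.ge.trans hi))
  rw [psize_eq_sum_range (conj lam) M hvanc, psize_eq_sum_range lam M hvan]
  have step : ∀ j, (conj lam).parts j =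
      ∑ i ∈ Finset.range M, (if j < lam.parts i then 1 else 0) := by
    intro j
    rw [parts_conj, pconj_eq_card_range lam j M hvan, Finset.card_filter]
  rw [Finset.sum_congr rfl (fun j _ => step j), Finset.sum_comm]
  apply Finset.sum_congr rfl
  intro i hi
  have hc : lam.parts i ≤ M := (parts_le_psize lam i).trans hM.ge
  calc ∑ j ∈ Finset.range M, (if j < lam.parts i then 1 else 0)
      = ((Finset.range M).filter fun j => j < lam.parts i).card :=
        (Finset.card_filter _ _).symm
    _ = (Finset.range (lam.parts i)).card := by rw [range_filter_lt hc]
    _ = lam.parts i := Finset.card_range _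



/-! ### finiteness and the zero partition -/

theorem finite_subtype (p : PartitionSeq → Prop) (n : ℕ)
    (h : ∀ lam, p lam → psize lam ≤ n) : Finite {lam : PartitionSeq // p lam} := by
  let f : {lam : PartitionSeq // p lam} → (Fin (n+1) → Fin (n+1)) := fun x i =>
    ⟨x.1.parts i, Nat.lt_succ_of_le ((parts_le_psize x.1 i).trans (h x.1 x.2))⟩
  have hf : Function.Injective f := by
    intro x y hxy
    apply Subtype.ext; apply pext
    intro i
    rcases Nat.lt_or_ge i (n+1) with hi | hi
    · have := congrArg Fin.val (congrFun hxy ⟨i, hi⟩)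
      simpa [f] using this
    · rw [parts_eq_zero_of_psize_le x.1 (h x.1 x.2) (by omega),
        parts_eq_zero_of_psize_le y.1 (h y.1 y.2) (by omega)]
  exact Finite.of_injective f hf

def pzero : PartitionSeq := ⟨0, fun _ _ _ => le_rfl⟩

@[simp] theorem parts_pzero (i : ℕ) : pzero.parts i = 0 := rfl

@[simp] theorem psize_pzero : psize pzero = 0 := by
  simp [psize, pzero]

theorem sc_pzero : ∀ j, pconj pzero j = pzero.parts j := by
  rw [sc_iff]
  intro i j
  simp

theorem eq_pzero {lam : PartitionSeq} (h : lam.parts 0 = 0) : lam = pzero := by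
  apply pext
  intro i
  have := lam.antitone (Nat.zero_le i)
  simp only [parts_pzero]
  omega

/-! ### strip / unstrip (remove or add the first row and column) -/

def strip (σ : PartitionSeq) : PartitionSeq :=
  ofFun (fun i => σ.parts (i+1) - 1)
    (fun i j hij => by
      have := σ.antitone (by omega : i+1 ≤ j+1)
      omega)
    (psize σ)
    (fun i hi => by
      rw [parts_eq_zero_of_psize_le σ le_rfl (by omega : psize σ ≤ i + 1)])

@[simp] theorem parts_strip (σ : PartitionSeq) (i : ℕ) :
    (strip σ).parts i = σ.parts (i+1) - 1 := rfl

def unstrip (m : ℕ) (τ : PartitionSeq) (h : τ.parts 0 ≤ m) : PartitionSeq :=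
  ofFun (fun i => if i = 0 then m + 1 else if i ≤ m then τ.parts (i-1) + 1 else 0)
    (by
      intro i j hij
      have h1 : ∀ t, τ.parts t ≤ m := fun t => (τ.antitone (Nat.zero_le t)).trans h
      have h2 := τ.antitone (show i - 1 ≤ j - 1 by omega)
      have h3 := h1 (i-1)
      have h4 := h1 (j-1)
      split_ifs <;> omega)
    (m+1)
    (fun i hi => by
      rw [if_neg (by omega), if_neg (by omega)])

@[simp] theorem parts_unstrip (m : ℕ) (τ : PartitionSeq) (h : τ.parts 0 ≤ m) (i : ℕ) :
    (unstrip m τ h).parts i =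
      if i = 0 then m + 1 else if i ≤ m then τ.parts (i-1) + 1 else 0 := rfl

theorem ssym_strip {σ : PartitionSeq} (hs : SSym σ) : SSym (strip σ) := by
  intro i j
  simp only [parts_strip]
  have := hs (i+1) (j+1)
  omega

theorem ssym_unstrip {m : ℕ} {τ : PartitionSeq} (h : τ.parts 0 ≤ m) (hs : SSym τ) :
    SSym (unstrip m τ h) := by
  have h1 : ∀ t, τ.parts t ≤ m := fun t => (τ.antitone (Nat.zero_le t)).trans h
  intro i j
  simp only [parts_unstrip]
  have h2 := hs (i-1) (j-1)
  have h3 := h1 (i-1)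
  have h4 := h1 (j-1)
  split_ifs <;> omega

theorem parts_vanish_of_ssym {σ : PartitionSeq} (hs : SSym σ) {i : ℕ}
    (hi : σ.parts 0 ≤ i) : σ.parts i = 0 := by
  have := hs i 0
  omega

theorem strip_unstrip {m : ℕ} {τ : PartitionSeq} (h : τ.parts 0 ≤ m) (hs : SSym τ) :
    strip (unstrip m τ h) = τ := by
  apply pext
  intro i
  simp only [parts_strip, parts_unstrip, Nat.add_sub_cancel]
  have h2 : m ≤ i → τ.parts i = 0 :=
    fun hi => parts_vanish_of_ssym hs (by omega)
  have h3 := τ.antitone (Nat.zero_le i)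
  split_ifs <;> first | omega | exact (by assumption : False).elim

theorem unstrip_strip {m : ℕ} {σ : PartitionSeq} (hs : SSym σ) (h0 : σ.parts 0 = m + 1)
    (h : (strip σ).parts 0 ≤ m) :
    unstrip m (strip σ) h = σ := by
  apply pext
  intro i
  simp only [parts_unstrip, parts_strip]
  have h2 : i - 1 + 1 = i ∨ i = 0 := by omega
  have h3 : 0 < i → i < m + 1 → 0 < σ.parts i := by
    intro _ hi
    have := hs i 0
    omega
  have h4 : m + 1 ≤ i → σ.parts i = 0 :=
    fun hi => parts_vanish_of_ssym hs (by omega)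
  rcases h2 with h2 | h2
  · rw [h2]
    split_ifs <;> omega
  · subst h2
    simp [h0]

theorem psize_strip {m : ℕ} {σ : PartitionSeq} (hs : SSym σ) (h0 : σ.parts 0 = m + 1) :
    psize σ = (2 * m + 1) + psize (strip σ) := by
  have hvan : ∀ i, m + 1 ≤ i → σ.parts i = 0 :=
    fun i hi => parts_vanish_of_ssym hs (by omega)
  have hvans : ∀ i, m ≤ i → (strip σ).parts i = 0 := by
    intro i hi
    simp only [parts_strip]
    rw [hvan (i+1) (by omega)]
  rw [psize_eq_sum_range σ (m+1) hvan, psize_eq_sum_range (strip σ) m hvans,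
    Finset.sum_range_succ']
  have hpos : ∀ i ∈ Finset.range m, σ.parts (i+1) = ((strip σ).parts i) + 1 := by
    intro i hi
    rw [Finset.mem_range] at hi
    have hp : 0 < σ.parts (i+1) := by have := hs (i+1) 0; omega
    simp only [parts_strip]
    omega
  rw [Finset.sum_congr rfl hpos, Finset.sum_add_distrib]
  simp only [parts_strip, Finset.sum_const, Finset.card_range, smul_eq_mul, mul_one, h0]
  omega

/-! ### shift / unshift (remove or add a first part) -/

def shiftp (β : PartitionSeq) : PartitionSeq :=
  ofFun (fun i => β.parts (i+1))
    (fun i j hij => β.antitone (by omega : i+1 ≤ j+1))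
    (psize β)
    (fun i hi => parts_eq_zero_of_psize_le β le_rfl (by omega))

@[simp] theorem parts_shiftp (β : PartitionSeq) (i : ℕ) :
    (shiftp β).parts i = β.parts (i+1) := rfl

def unshift (c : ℕ) (β : PartitionSeq) (h : β.parts 0 ≤ c) : PartitionSeq :=
  ofFun (fun i => if i = 0 then c else β.parts (i-1))
    (by
      intro i j hij
      have h2 := β.antitone (show i - 1 ≤ j - 1 by omega)
      have h3 := (β.antitone (Nat.zero_le (j-1))).trans h
      split_ifs <;> omega)
    (psize β + 1)
    (fun i hi => by
      rw [if_neg (by omega)]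
      exact parts_eq_zero_of_psize_le β le_rfl (by omega))

@[simp] theorem parts_unshift (c : ℕ) (β : PartitionSeq) (h : β.parts 0 ≤ c) (i : ℕ) :
    (unshift c β h).parts i = if i = 0 then c else β.parts (i-1) := rfl

theorem psize_shiftp (β : PartitionSeq) : psize β = β.parts 0 + psize (shiftp β) := by
  have hvan : ∀ i, psize β + 1 ≤ i → β.parts i = 0 :=
    fun i hi => parts_eq_zero_of_psize_le β le_rfl (by omega)
  have hvans : ∀ i, psize β ≤ i → (shiftp β).parts i = 0 := by
    intro i hi
    simp only [parts_shiftp]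
    exact parts_eq_zero_of_psize_le β le_rfl (by omega)
  conv_lhs => rw [psize_eq_sum_range β (psize β + 1) hvan]
  rw [psize_eq_sum_range (shiftp β) (psize β) hvans, Finset.sum_range_succ']
  simp only [parts_shiftp]
  omega

theorem shiftp_unshift (c : ℕ) (β : PartitionSeq) (h : β.parts 0 ≤ c) :
    shiftp (unshift c β h) = β := by
  apply pext
  intro i
  simp only [parts_shiftp, parts_unshift]
  rw [if_neg (by omega)]
  simp

theorem psize_unshift (c : ℕ) (β : PartitionSeq) (h : β.parts 0 ≤ c) :
    psize (unshift c β h) = c + psize β := by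
  have h1 := psize_shiftp (unshift c β h)
  rw [shiftp_unshift c β h] at h1
  simpa using h1

theorem unshift_shiftp {c : ℕ} {β : PartitionSeq} (h0 : β.parts 0 = c)
    (h : (shiftp β).parts 0 ≤ c) : unshift c (shiftp β) h = β := by
  apply pext
  intro i
  simp only [parts_unshift, parts_shiftp]
  rcases Nat.eq_zero_or_pos i with hi | hi
  · subst hi; simp [h0]
  · rw [if_neg (by omega)]
    congr 1
    omega

theorem psize_unstrip {m : ℕ} {τ : PartitionSeq} (h : τ.parts 0 ≤ m) (hs : SSym τ) :
    psize (unstrip m τ h) = (2*m+1) + psize τ := by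
  have h0 : (unstrip m τ h).parts 0 = m + 1 := by simp
  have h1 := psize_strip (ssym_unstrip h hs) h0
  rw [strip_unstrip h hs] at h1
  exact h1

/-! ### the counts -/

noncomputable def Acount (m n : ℕ) : ℕ :=
  Nat.card {σ : PartitionSeq //
    (∀ j, pconj σ j = σ.parts j) ∧ σ.parts 0 ≤ m ∧ psize σ = n}

noncomputable def Bcount (l n : ℕ) : ℕ :=
  Nat.card {β : PartitionSeq // β.parts 0 ≤ l ∧ 2 * psize β = n}

theorem Acount_zero (n : ℕ) : Acount 0 n = if n = 0 then 1 else 0 := by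
  rw [Acount]
  split_ifs with hn
  · subst hn
    haveI : Nonempty {σ : PartitionSeq //
        (∀ j, pconj σ j = σ.parts j) ∧ σ.parts 0 ≤ 0 ∧ psize σ = 0} :=
      ⟨⟨pzero, sc_pzero, le_rfl, psize_pzero⟩⟩
    haveI : Subsingleton {σ : PartitionSeq //
        (∀ j, pconj σ j = σ.parts j) ∧ σ.parts 0 ≤ 0 ∧ psize σ = 0} := by
      constructor
      rintro ⟨a, _, ha, _⟩ ⟨b, _, hb, _⟩
      apply Subtype.ext
      simp only
      rw [eq_pzero (Nat.le_zero.mp ha), eq_pzero (Nat.le_zero.mp hb)]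
    exact Nat.card_unique
  · haveI : IsEmpty {σ : PartitionSeq //
        (∀ j, pconj σ j = σ.parts j) ∧ σ.parts 0 ≤ 0 ∧ psize σ = n} := by
      constructor
      rintro ⟨a, _, ha, hsz⟩
      rw [eq_pzero (Nat.le_zero.mp ha), psize_pzero] at hsz
      exact hn hsz.symm
    exact Nat.card_of_isEmpty

theorem Bcount_zero (n : ℕ) : Bcount 0 n = if n = 0 then 1 else 0 := by
  rw [Bcount]
  split_ifs with hn
  · subst hn
    haveI : Nonempty {β : PartitionSeq // β.parts 0 ≤ 0 ∧ 2 * psize β = 0} :=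
      ⟨⟨pzero, le_rfl, by simp⟩⟩
    haveI : Subsingleton {β : PartitionSeq // β.parts 0 ≤ 0 ∧ 2 * psize β = 0} := by
      constructor
      rintro ⟨a, ha, _⟩ ⟨b, hb, _⟩
      apply Subtype.ext
      simp only
      rw [eq_pzero (Nat.le_zero.mp ha), eq_pzero (Nat.le_zero.mp hb)]
    exact Nat.card_unique
  · haveI : IsEmpty {β : PartitionSeq // β.parts 0 ≤ 0 ∧ 2 * psize β = n} := by
      constructor
      rintro ⟨a, ha, hsz⟩
      rw [eq_pzero (Nat.le_zero.mp ha)] at hsz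
      simp at hsz
      exact hn hsz.symm
    exact Nat.card_of_isEmpty

theorem Acount_succ (m n : ℕ) :
    Acount (m+1) n = Acount m n +
      (if 2*m+1 ≤ n then Acount m (n - (2*m+1)) else 0) := by
  haveI hT : Finite {σ : PartitionSeq //
      (∀ j, pconj σ j = σ.parts j) ∧ σ.parts 0 ≤ m + 1 ∧ psize σ = n} :=
    finite_subtype _ n (fun lam h => h.2.2.le)
  haveI hT1 : Finite {σ : PartitionSeq //
      (∀ j, pconj σ j = σ.parts j) ∧ σ.parts 0 ≤ m ∧ psize σ = n} :=
    finite_subtype _ n (fun lam h => h.2.2.le)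
  haveI hT2 : Finite {τ : PartitionSeq //
      (∀ j, pconj τ j = τ.parts j) ∧ τ.parts 0 ≤ m ∧ (2*m+1) + psize τ = n} :=
    finite_subtype _ n (fun lam h => by omega)
  have key : Acount (m+1) n = Acount m n + Nat.card {τ : PartitionSeq //
      (∀ j, pconj τ j = τ.parts j) ∧ τ.parts 0 ≤ m ∧ (2*m+1) + psize τ = n} := by
    rw [Acount, Acount, ← Nat.card_sum]
    refine (Nat.card_eq_of_bijective (Sum.elim
      (fun x => ⟨x.1, x.2.1, x.2.2.1.trans (Nat.le_succ m), x.2.2.2⟩)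
      (fun y => ⟨unstrip m y.1 y.2.2.1,
        (sc_iff _).mpr (ssym_unstrip y.2.2.1 ((sc_iff _).mp y.2.1)),
        le_of_eq (by simp),
        by rw [psize_unstrip y.2.2.1 ((sc_iff _).mp y.2.1)]; exact y.2.2.2⟩)) ?_).symm
    constructor
    · rintro (x | y) (x' | y') hab
      · simp only [Sum.elim_inl, Subtype.mk.injEq] at hab
        exact congrArg Sum.inl (Subtype.ext hab)
      · exfalso
        have h1 := congrArg (fun z => (Subtype.val z).parts 0) hab
        simp at h1
        have := x.2.2.1
        omega
      · exfalso
        have h1 := congrArg (fun z => (Subtype.val z).parts 0) hab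
        simp at h1
        have := x'.2.2.1
        omega
      · apply congrArg Sum.inr
        apply Subtype.ext
        have h1 := Subtype.ext_iff.mp hab
        simp only [Sum.elim_inr] at h1
        have h2 : strip (unstrip m y.1 y.2.2.1) = strip (unstrip m y'.1 y'.2.2.1) := by
          rw [h1]
        rwa [strip_unstrip y.2.2.1 ((sc_iff _).mp y.2.1),
          strip_unstrip y'.2.2.1 ((sc_iff _).mp y'.2.1)] at h2
    · rintro ⟨σ, hsc, hbd, hsz⟩
      by_cases h0 : σ.parts 0 ≤ m
      · exact ⟨Sum.inl ⟨σ, hsc, h0, hsz⟩, rfl⟩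
      · have h0' : σ.parts 0 = m + 1 := by omega
        have hss : SSym σ := (sc_iff _).mp hsc
        have hbd' : (strip σ).parts 0 ≤ m := by
          simp only [parts_strip]
          have := σ.antitone (Nat.zero_le (0+1))
          omega
        refine ⟨Sum.inr ⟨strip σ, (sc_iff _).mpr (ssym_strip hss), hbd', ?_⟩, ?_⟩
        · have := psize_strip hss h0'
          omega
        · apply Subtype.ext
          simp only [Sum.elim_inr]
          exact unstrip_strip hss h0' hbd'
  rw [key]
  congr 1
  by_cases hn : 2*m+1 ≤ n
  · rw [if_pos hn, Acount]
    apply Nat.card_congr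
    apply Equiv.subtypeEquivRight
    intro τ
    constructor
    · rintro ⟨a, b, c⟩; exact ⟨a, b, by omega⟩
    · rintro ⟨a, b, c⟩; exact ⟨a, b, by omega⟩
  · rw [if_neg hn]
    haveI : IsEmpty {τ : PartitionSeq //
        (∀ j, pconj τ j = τ.parts j) ∧ τ.parts 0 ≤ m ∧ (2*m+1) + psize τ = n} := by
      constructor
      rintro ⟨τ, _, _, hsz⟩
      exact hn (by omega)
    exact Nat.card_of_isEmpty

theorem Bcount_succ (l n : ℕ) :
    Bcount (l+1) n = Bcount l n +
      (if 2*(l+1) ≤ n then Bcount (l+1) (n - 2*(l+1)) else 0) := by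
  haveI hT : Finite {β : PartitionSeq // β.parts 0 ≤ l + 1 ∧ 2 * psize β = n} :=
    finite_subtype _ n (fun lam h => by omega)
  haveI hT1 : Finite {β : PartitionSeq // β.parts 0 ≤ l ∧ 2 * psize β = n} :=
    finite_subtype _ n (fun lam h => by omega)
  haveI hT2 : Finite {β : PartitionSeq //
      β.parts 0 ≤ l + 1 ∧ 2*(l+1) + 2 * psize β = n} :=
    finite_subtype _ n (fun lam h => by omega)
  have key : Bcount (l+1) n = Bcount l n + Nat.card {β : PartitionSeq //
      β.parts 0 ≤ l + 1 ∧ 2*(l+1) + 2 * psize β = n} := by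
    rw [Bcount, Bcount, ← Nat.card_sum]
    refine (Nat.card_eq_of_bijective (Sum.elim
      (fun x => ⟨x.1, x.2.1.trans (Nat.le_succ l), x.2.2⟩)
      (fun y => ⟨unshift (l+1) y.1 y.2.1,
        le_of_eq (by simp),
        by rw [psize_unshift]; have := y.2.2; omega⟩)) ?_).symm
    constructor
    · rintro (x | y) (x' | y') hab
      · simp only [Sum.elim_inl, Subtype.mk.injEq] at hab
        exact congrArg Sum.inl (Subtype.ext hab)
      · exfalso
        have h1 := congrArg (fun z => (Subtype.val z).parts 0) hab
        simp at h1
        have := x.2.1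
        omega
      · exfalso
        have h1 := congrArg (fun z => (Subtype.val z).parts 0) hab
        simp at h1
        have := x'.2.1
        omega
      · apply congrArg Sum.inr
        apply Subtype.ext
        have h1 := Subtype.ext_iff.mp hab
        simp only [Sum.elim_inr] at h1
        have h2 : shiftp (unshift (l+1) y.1 y.2.1) =
            shiftp (unshift (l+1) y'.1 y'.2.1) := by rw [h1]
        rwa [shiftp_unshift, shiftp_unshift] at h2
    · rintro ⟨β, hbd, hsz⟩
      by_cases h0 : β.parts 0 ≤ l
      · exact ⟨Sum.inl ⟨β, h0, hsz⟩, rfl⟩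
      · have h0' : β.parts 0 = l + 1 := by omega
        have hbd' : (shiftp β).parts 0 ≤ l + 1 := by
          simp only [parts_shiftp]
          have := β.antitone (Nat.zero_le (0+1))
          omega
        refine ⟨Sum.inr ⟨shiftp β, hbd', ?_⟩, ?_⟩
        · have := psize_shiftp β
          omega
        · apply Subtype.ext
          simp only [Sum.elim_inr]
          exact unshift_shiftp h0' hbd'
  rw [key]
  congr 1
  by_cases hn : 2*(l+1) ≤ n
  · rw [if_pos hn, Bcount]
    apply Nat.card_congr
    apply Equiv.subtypeEquivRight
    intro β
    constructor
    · rintro ⟨a, b⟩; exact ⟨a, by omega⟩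
    · rintro ⟨a, b⟩; exact ⟨a, by omega⟩
  · rw [if_neg hn]
    haveI : IsEmpty {β : PartitionSeq //
        β.parts 0 ≤ l + 1 ∧ 2*(l+1) + 2 * psize β = n} := by
      constructor
      rintro ⟨β, _, hsz⟩
      exact hn (by omega)
    exact Nat.card_of_isEmpty

/-! ### the main bijection -/

noncomputable def Ccount (k l n : ℕ) : ℕ :=
  Nat.card {lam : PartitionSeq //
    psize lam = n ∧ (∀ j, pconj lam j = lam.parts j) ∧
    lam.parts k ≤ l ∧ l ≤ lam.parts (k - 1)}

def build (k l : ℕ) (hlk : l ≤ k) (σ β : PartitionSeq)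
    (hσ : σ.parts 0 ≤ k - l) (hβ : β.parts 0 ≤ l) : PartitionSeq :=
  ofFun (fun i => if i < l then k + pconj β i
      else if i < k then l + σ.parts (i - l) else β.parts (i - k))
    (by
      intro i j hij
      have h1 := pconj_anti β hij
      have h2 := σ.antitone (show i - l ≤ j - l by omega)
      have h3 := β.antitone (show i - k ≤ j - k by omega)
      have h4 := (σ.antitone (Nat.zero_le (j - l))).trans hσ
      have h5 := (β.antitone (Nat.zero_le (j - k))).trans hβ
      split_ifs <;> omega)
    (k + psize β + 1)
    (by
      intro i hi
      rw [if_neg (by omega), if_neg (by omega)]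
      exact parts_eq_zero_of_psize_le β le_rfl (by omega))

@[simp] theorem parts_build (k l : ℕ) (hlk : l ≤ k) (σ β : PartitionSeq)
    (hσ : σ.parts 0 ≤ k - l) (hβ : β.parts 0 ≤ l) (i : ℕ) :
    (build k l hlk σ β hσ hβ).parts i =
      if i < l then k + pconj β i
      else if i < k then l + σ.parts (i - l) else β.parts (i - k) := rfl

theorem ssym_build (k l : ℕ) (hlk : l ≤ k) (σ β : PartitionSeq)
    (hσ : σ.parts 0 ≤ k - l) (hβ : β.parts 0 ≤ l) (hss : SSym σ) :
    SSym (build k l hlk σ β hσ hβ) := by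
  intro i j
  simp only [parts_build]
  have h1 := lt_pconj_iff β i (j - k)
  have h2 := lt_pconj_iff β j (i - k)
  have h3 := hss (i - l) (j - l)
  have h4 := (σ.antitone (Nat.zero_le (j - l))).trans hσ
  have h5 := (σ.antitone (Nat.zero_le (i - l))).trans hσ
  have h6 := (β.antitone (Nat.zero_le (j - k))).trans hβ
  have h7 := (β.antitone (Nat.zero_le (i - k))).trans hβ
  split_ifs <;> omega

theorem psize_build (k l : ℕ) (hlk : l ≤ k) (σ β : PartitionSeq)
    (hσ : σ.parts 0 ≤ k - l) (hβ : β.parts 0 ≤ l) (hss : SSym σ) :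
    psize (build k l hlk σ β hσ hβ) =
      (2 * k * l - l ^ 2) + psize σ + 2 * psize β := by
  have hvan : ∀ i, k + psize β + 1 ≤ i → (build k l hlk σ β hσ hβ).parts i = 0 := by
    intro i hi
    simp only [parts_build]
    rw [if_neg (by omega), if_neg (by omega)]
    exact parts_eq_zero_of_psize_le β le_rfl (by omega)
  rw [psize_eq_sum_range _ (k + psize β + 1) hvan]
  have hsplit1 : Finset.range (k + psize β + 1) = Finset.Ico 0 (k + psize β + 1) := by
    rw [Finset.range_eq_Ico]
  rw [hsplit1,
    ← Finset.sum_Ico_consecutive _ (Nat.zero_le l) (by omega : l ≤ k + psize β + 1),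
    ← Finset.sum_Ico_consecutive _ (hlk : l ≤ k) (by omega : k ≤ k + psize β + 1)]
  have e1 : ∑ i ∈ Finset.Ico 0 l, (build k l hlk σ β hσ hβ).parts i
      = k * l + psize β := by
    rw [← Finset.range_eq_Ico]
    have : ∀ i ∈ Finset.range l, (build k l hlk σ β hσ hβ).parts i
        = k + pconj β i := by
      intro i hi
      rw [Finset.mem_range] at hi
      simp only [parts_build]
      rw [if_pos hi]
    rw [Finset.sum_congr rfl this, Finset.sum_add_distrib]
    have hvc : ∀ i, l ≤ i → (conj β).parts i = 0 := by
      intro i hi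
      exact pconj_eq_zero β (hβ.trans hi)
    have : ∑ i ∈ Finset.range l, pconj β i = psize β := by
      have h1 := psize_eq_sum_range (conj β) l hvc
      simp only [parts_conj] at h1
      rw [← h1, psize_conj]
    rw [this]
    simp [mul_comm]
  have e2 : ∑ i ∈ Finset.Ico l k, (build k l hlk σ β hσ hβ).parts i
      = (k - l) * l + psize σ := by
    rw [Finset.sum_Ico_eq_sum_range]
    have : ∀ i ∈ Finset.range (k - l), (build k l hlk σ β hσ hβ).parts (l + i)
        = l + σ.parts i := by
      intro i hi
      rw [Finset.mem_range] at hi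
      simp only [parts_build]
      rw [if_neg (by omega), if_pos (by omega)]
      have hidx : l + i - l = i := by omega
      rw [hidx]
    rw [Finset.sum_congr rfl this, Finset.sum_add_distrib]
    have hvs : ∀ i, k - l ≤ i → σ.parts i = 0 :=
      fun i hi => parts_vanish_of_ssym hss (hσ.trans hi)
    rw [← psize_eq_sum_range σ (k - l) hvs]
    simp [mul_comm]
  have e3 : ∑ i ∈ Finset.Ico k (k + psize β + 1),
      (build k l hlk σ β hσ hβ).parts i = psize β := by
    rw [Finset.sum_Ico_eq_sum_range]
    have : ∀ i ∈ Finset.range (k + psize β + 1 - k),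
        (build k l hlk σ β hσ hβ).parts (k + i) = β.parts i := by
      intro i hi
      simp only [parts_build]
      rw [if_neg (by omega), if_neg (by omega)]
      have hidx : k + i - k = i := by omega
      rw [hidx]
    rw [Finset.sum_congr rfl this]
    have hr : k + psize β + 1 - k = psize β + 1 := by omega
    rw [hr, ← psize_eq_sum_range β (psize β + 1)
      (fun i hi => parts_eq_zero_of_psize_le β le_rfl (by omega))]
  rw [e1, e2, e3]
  have hmul : (k - l) * l = k * l - l * l := by
    rw [Nat.sub_mul]
  have hle : l * l ≤ k * l := Nat.mul_le_mul_right l hlk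
  have hsq : l ^ 2 = l * l := sq l
  have h2 : 2 * k * l = k * l + k * l := by ring
  omega

theorem build_parts_top (k l : ℕ) (hlk : l ≤ k) (σ β : PartitionSeq)
    (hσ : σ.parts 0 ≤ k - l) (hβ : β.parts 0 ≤ l) (t : ℕ) :
    (build k l hlk σ β hσ hβ).parts (k + t) = β.parts t := by
  simp only [parts_build]
  rw [if_neg (by omega), if_neg (by omega)]
  congr 1
  omega

theorem build_parts_mid (k l : ℕ) (hlk : l ≤ k) (σ β : PartitionSeq)
    (hσ : σ.parts 0 ≤ k - l) (hβ : β.parts 0 ≤ l) (t : ℕ) (ht : t < k - l) :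
    (build k l hlk σ β hσ hβ).parts (l + t) = l + σ.parts t := by
  simp only [parts_build]
  rw [if_neg (by omega), if_pos (by omega)]
  congr 2
  omega

theorem Ccount_eq_pairs (k l n : ℕ) (hlk : l ≤ k) :
    Ccount k l n = Nat.card {x : PartitionSeq × PartitionSeq //
      ((∀ j, pconj x.1 j = x.1.parts j) ∧ x.1.parts 0 ≤ k - l) ∧
      (x.2.parts 0 ≤ l) ∧
      (2 * k * l - l ^ 2) + psize x.1 + 2 * psize x.2 = n} := by
  rw [Ccount]
  refine (Nat.card_eq_of_bijective (fun x =>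
    ⟨build k l hlk x.1.1 x.1.2 x.2.1.2 x.2.2.1,
      by
        rw [psize_build k l hlk _ _ _ _ ((sc_iff _).mp x.2.1.1)]
        exact x.2.2.2,
      (sc_iff _).mpr (ssym_build k l hlk _ _ _ _ ((sc_iff _).mp x.2.1.1)),
      by
        have h1 := build_parts_top k l hlk x.1.1 x.1.2 x.2.1.2 x.2.2.1 0
        have h2 : k + 0 = k := rfl
        rw [h2] at h1
        rw [h1]
        exact x.2.2.1,
      by
        simp only [parts_build]
        have h5 := (x.1.2.antitone (Nat.zero_le (k - 1 - k))).trans x.2.2.1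
        split_ifs <;> omega⟩) ?_).symm
  constructor
  · intro x y hab
    have hB := congrArg Subtype.val hab
    simp only at hB
    have hssx : SSym x.1.1 := (sc_iff _).mp x.2.1.1
    have hssy : SSym y.1.1 := (sc_iff _).mp y.2.1.1
    apply Subtype.ext
    apply Prod.ext
    · apply pext
      intro t
      by_cases ht : t < k - l
      · have h1 := build_parts_mid k l hlk x.1.1 x.1.2 x.2.1.2 x.2.2.1 t ht
        have h2 := build_parts_mid k l hlk y.1.1 y.1.2 y.2.1.2 y.2.2.1 t ht
        rw [hB] at h1
        omega
      · rw [parts_vanish_of_ssym hssx (x.2.1.2.trans (by omega)),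
          parts_vanish_of_ssym hssy (y.2.1.2.trans (by omega))]
    · apply pext
      intro t
      have h1 := build_parts_top k l hlk x.1.1 x.1.2 x.2.1.2 x.2.2.1 t
      have h2 := build_parts_top k l hlk y.1.1 y.1.2 y.2.1.2 y.2.2.1 t
      rw [hB] at h1
      rw [← h1, ← h2]
  · rintro ⟨lam, hn, hsc, hk, hk1⟩
    have hss : SSym lam := (sc_iff lam).mp hsc
    have hσa : ∀ ⦃i j : ℕ⦄, i ≤ j → lam.parts (l+j) - l ≤ lam.parts (l+i) - l := by
      intro i j hij
      have := lam.antitone (show l+i ≤ l+j by omega)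
      omega
    have hσv : ∀ t, psize lam ≤ t → lam.parts (l+t) - l = 0 := by
      intro t ht
      have := parts_eq_zero_of_psize_le lam le_rfl (show psize lam ≤ l + t by omega)
      omega
    have hβa : ∀ ⦃i j : ℕ⦄, i ≤ j → lam.parts (k+j) ≤ lam.parts (k+i) := by
      intro i j hij
      exact lam.antitone (show k+i ≤ k+j by omega)
    have hβv : ∀ t, psize lam ≤ t → lam.parts (k+t) = 0 := by
      intro t ht
      exact parts_eq_zero_of_psize_le lam le_rfl (by omega)
    let σ : PartitionSeq := ofFun (fun t => lam.parts (l+t) - l) hσa (psize lam) hσv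
    let β : PartitionSeq := ofFun (fun t => lam.parts (k+t)) hβa (psize lam) hβv
    have hσ0 : σ.parts 0 ≤ k - l := by
      show lam.parts (l+0) - l ≤ k - l
      rw [Nat.add_zero]
      have h9 := hss l k
      omega
    have hβ0 : β.parts 0 ≤ l := by
      show lam.parts (k+0) ≤ l
      rw [Nat.add_zero]
      exact hk
    have hσss : SSym σ := by
      intro i j
      show j < lam.parts (l+i) - l ↔ i < lam.parts (l+j) - l
      have := hss (l+i) (l+j)
      omega
    have hk1' : ∀ t, t < k → l ≤ lam.parts t := by
      intro t ht
      exact hk1.trans (lam.antitone (show t ≤ k - 1 by omega))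
    have key2 : ∀ i, i < l → lam.parts i = k + pconj β i := by
      intro i hi
      have hka : k ≤ lam.parts i := by
        have h9 := hss i (k-1)
        have h10 := hk1
        omega
      have key : ∀ m, m < pconj β i ↔ k + m < lam.parts i := by
        intro m
        have h1 := lt_pconj_iff β i m
        have h2 : β.parts m = lam.parts (k+m) := rfl
        have h3 := hss (k+m) i
        omega
      have h4 : pconj β i = lam.parts i - k :=
        nat_eq_of_lt_iff (fun m => by have := key m; omega)
      omega
    have hround : build k l hlk σ β hσ0 hβ0 = lam := by
      apply pext
      intro i
      simp only [parts_build]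
      split_ifs with h1 h2
      · exact (key2 i h1).symm
      · show l + (lam.parts (l + (i - l)) - l) = lam.parts i
        rw [show l + (i - l) = i by omega]
        have := hk1' i h2
        omega
      · show lam.parts (k + (i - k)) = lam.parts i
        rw [show k + (i - k) = i by omega]
    refine ⟨⟨(σ, β), ⟨⟨(sc_iff σ).mpr hσss, hσ0⟩, hβ0, ?_⟩⟩, Subtype.ext ?_⟩
    · show (2 * k * l - l ^ 2) + psize σ + 2 * psize β = n
      have hpb := psize_build k l hlk σ β hσ0 hβ0 hσss
      rw [hround] at hpb
      omega
    · exact hround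

theorem pairs_card (k l n : ℕ) (hlk : l ≤ k) :
    Nat.card {x : PartitionSeq × PartitionSeq //
      ((∀ j, pconj x.1 j = x.1.parts j) ∧ x.1.parts 0 ≤ k - l) ∧
      (x.2.parts 0 ≤ l) ∧
      (2 * k * l - l ^ 2) + psize x.1 + 2 * psize x.2 = n} =
    if 2 * k * l - l ^ 2 ≤ n then
      ∑ pq ∈ Finset.HasAntidiagonal.antidiagonal (n - (2 * k * l - l ^ 2)),
        Acount (k - l) pq.1 * Bcount l pq.2
    else 0 := by
  split_ifs with he
  · have E : {x : PartitionSeq × PartitionSeq //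
        ((∀ j, pconj x.1 j = x.1.parts j) ∧ x.1.parts 0 ≤ k - l) ∧
        (x.2.parts 0 ≤ l) ∧
        (2 * k * l - l ^ 2) + psize x.1 + 2 * psize x.2 = n} ≃
        (Σ pq : ↥(Finset.HasAntidiagonal.antidiagonal (n - (2 * k * l - l ^ 2))),
          ({σ : PartitionSeq // (∀ j, pconj σ j = σ.parts j) ∧ σ.parts 0 ≤ k - l ∧
              psize σ = (pq : ℕ × ℕ).1} ×
           {β : PartitionSeq // β.parts 0 ≤ l ∧ 2 * psize β = (pq : ℕ × ℕ).2})) := by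
      refine ⟨fun x => ⟨⟨(psize x.1.1, 2 * psize x.1.2),
          Finset.HasAntidiagonal.mem_antidiagonal.mpr (by have := x.2.2.2; omega)⟩,
          (⟨x.1.1, x.2.1.1, x.2.1.2, rfl⟩, ⟨x.1.2, x.2.2.1, rfl⟩)⟩,
        fun y => ⟨(y.2.1.1, y.2.2.1), ⟨⟨y.2.1.2.1, y.2.1.2.2.1⟩, y.2.2.2.1, ?_⟩⟩,
        fun x => rfl, ?_⟩
      · show (2 * k * l - l ^ 2) + psize y.2.1.1 + 2 * psize y.2.2.1 = n
        have h1 := y.2.1.2.2.2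
        have h2 := y.2.2.2.2
        have h3 := Finset.HasAntidiagonal.mem_antidiagonal.mp y.1.2
        omega
      · rintro ⟨⟨⟨p, q⟩, hpq⟩, ⟨σ, hσ1, hσ2, hσ3⟩, ⟨β, hβ1, hβ2⟩⟩
        simp only at hσ3 hβ2
        subst hσ3
        subst hβ2
        rfl
    rw [Nat.card_congr E]
    haveI hFσ : ∀ pq : ↥(Finset.HasAntidiagonal.antidiagonal (n - (2 * k * l - l ^ 2))),
        Fintype {σ : PartitionSeq // (∀ j, pconj σ j = σ.parts j) ∧ σ.parts 0 ≤ k - l ∧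
            psize σ = (pq : ℕ × ℕ).1} := fun pq =>
      @Fintype.ofFinite _ (finite_subtype _ (pq : ℕ × ℕ).1 (fun lam h => h.2.2.le))
    haveI hFβ : ∀ pq : ↥(Finset.HasAntidiagonal.antidiagonal (n - (2 * k * l - l ^ 2))),
        Fintype {β : PartitionSeq // β.parts 0 ≤ l ∧ 2 * psize β = (pq : ℕ × ℕ).2} :=
      fun pq =>
      @Fintype.ofFinite _ (finite_subtype _ (pq : ℕ × ℕ).2 (fun lam h => by omega))
    rw [Nat.card_eq_fintype_card, Fintype.card_sigma,
      ← Finset.sum_coe_sort (Finset.HasAntidiagonal.antidiagonal (n - (2 * k * l - l ^ 2)))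
        (fun pq => Acount (k - l) pq.1 * Bcount l pq.2)]
    apply Finset.sum_congr rfl
    intro pq _
    rw [Fintype.card_prod, ← Nat.card_eq_fintype_card, ← Nat.card_eq_fintype_card]
    rfl
  · haveI : IsEmpty {x : PartitionSeq × PartitionSeq //
        ((∀ j, pconj x.1 j = x.1.parts j) ∧ x.1.parts 0 ≤ k - l) ∧
        (x.2.parts 0 ≤ l) ∧
        (2 * k * l - l ^ 2) + psize x.1 + 2 * psize x.2 = n} := by
      constructor
      rintro ⟨x, _, _, hsz⟩
      exact he (by omega)
    exact Nat.card_of_isEmpty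

/-! ### power series -/

open PowerSeries

theorem FA_eq (m : ℕ) :
    (PowerSeries.mk fun n => (Acount m n : ℚ)) =
      ∏ i ∈ Finset.range m, (1 + (X : PowerSeries ℚ) ^ (2 * i + 1)) := by
  induction m with
  | zero =>
    rw [Finset.range_zero, Finset.prod_empty]
    ext n
    rw [PowerSeries.coeff_mk, PowerSeries.coeff_one, Acount_zero]
    split_ifs <;> simp
  | succ m ih =>
    rw [Finset.prod_range_succ, ← ih]
    ext n
    rw [mul_add, mul_one, map_add, PowerSeries.coeff_mk,
      PowerSeries.coeff_mul_X_pow']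
    have hrec := Acount_succ m n
    split_ifs with h
    · rw [PowerSeries.coeff_mk, PowerSeries.coeff_mk, if_pos h] at *
      rw [hrec]
      push_cast
      ring
    · rw [PowerSeries.coeff_mk, if_neg h] at *
      rw [hrec]
      push_cast
      ring
  
theorem FB_eq (l : ℕ) :
    (PowerSeries.mk fun n => (Bcount l n : ℚ)) *
      ∏ i ∈ Finset.range l, (1 - (X : PowerSeries ℚ) ^ (2 * (i + 1))) = 1 := by
  induction l with
  | zero =>
    rw [Finset.range_zero, Finset.prod_empty, mul_one]
    ext n
    rw [PowerSeries.coeff_mk, PowerSeries.coeff_one, Bcount_zero]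
    split_ifs <;> simp
  | succ l ih =>
    have step : (PowerSeries.mk fun n => (Bcount (l+1) n : ℚ)) *
        (1 - (X : PowerSeries ℚ) ^ (2 * (l + 1))) =
        (PowerSeries.mk fun n => (Bcount l n : ℚ)) := by
      ext n
      rw [mul_sub, mul_one, map_sub, PowerSeries.coeff_mk,
        PowerSeries.coeff_mul_X_pow', PowerSeries.coeff_mk]
      have hrec := Bcount_succ l n
      split_ifs with h
      · rw [PowerSeries.coeff_mk, if_pos h] at *
        rw [hrec]
        push_cast
        ring
      · rw [if_neg h] at *
        rw [hrec, PowerSeries.coeff_mk]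
        push_cast
        ring
    calc (PowerSeries.mk fun n => (Bcount (l+1) n : ℚ)) *
          ∏ i ∈ Finset.range (l+1), (1 - (X : PowerSeries ℚ) ^ (2 * (i + 1)))
        = ((PowerSeries.mk fun n => (Bcount (l+1) n : ℚ)) *
            (1 - (X : PowerSeries ℚ) ^ (2 * (l + 1)))) *
            ∏ i ∈ Finset.range l, (1 - (X : PowerSeries ℚ) ^ (2 * (i + 1))) := by
          rw [Finset.prod_range_succ]; ring
      _ = 1 := by rw [step, ih]

theorem FC_eq (k l : ℕ) (hlk : l ≤ k) :
    (PowerSeries.mk fun n => (Ccount k l n : ℚ)) =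
      (PowerSeries.mk fun n => (Acount (k - l) n : ℚ)) *
        (PowerSeries.mk fun n => (Bcount l n : ℚ)) *
        (X : PowerSeries ℚ) ^ (2 * k * l - l ^ 2) := by
  ext n
  rw [PowerSeries.coeff_mk, PowerSeries.coeff_mul_X_pow',
    Ccount_eq_pairs k l n hlk, pairs_card k l n hlk]
  split_ifs with h
  · rw [PowerSeries.coeff_mul]
    push_cast
    apply Finset.sum_congr rfl
    intro pq _
    rw [PowerSeries.coeff_mk, PowerSeries.coeff_mk]
  · simp

end SCGF

/-- For `k ≥ ℓ ≥ 0`, the generating function by size of self-conjugate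
partitions in `H(k,ℓ)` but not in `H(k-1,ℓ-1)` (i.e. self-conjugate typical
partitions) is `u^{2kℓ-ℓ²} ∏_{i=1}^{k-ℓ}(1+u^{2i-1}) ∏_{i=1}^{ℓ}(1-u^{2i})⁻¹`. -/
theorem selfconjugate_typical_gf (k l : ℕ) (hlk : l ≤ k) :
    (PowerSeries.mk fun n =>
        (Nat.card {lam : PartitionSeq //
            psize lam = n ∧ (∀ j, pconj lam j = lam.parts j) ∧
            lam.parts k ≤ l ∧ l ≤ lam.parts (k - 1)} : ℚ)) *
        (∏ i ∈ Finset.range l, (1 - (X : PowerSeries ℚ) ^ (2 * (i + 1)))) =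
      (X : PowerSeries ℚ) ^ (2 * k * l - l ^ 2) *
        ∏ i ∈ Finset.range (k - l), (1 + (X : PowerSeries ℚ) ^ (2 * i + 1)) := by
  have hC : (PowerSeries.mk fun n =>
      (Nat.card {lam : PartitionSeq //
          psize lam = n ∧ (∀ j, pconj lam j = lam.parts j) ∧
          lam.parts k ≤ l ∧ l ≤ lam.parts (k - 1)} : ℚ)) =
      PowerSeries.mk fun n => (SCGF.Ccount k l n : ℚ) := rfl
  rw [hC, SCGF.FC_eq k l hlk, SCGF.FA_eq]
  have hB := SCGF.FB_eq l
  calc ((∏ i ∈ Finset.range (k - l), (1 + (X : PowerSeries ℚ) ^ (2 * i + 1))) *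
          (PowerSeries.mk fun n => (SCGF.Bcount l n : ℚ)) *
          (X : PowerSeries ℚ) ^ (2 * k * l - l ^ 2)) *
        (∏ i ∈ Finset.range l, (1 - (X : PowerSeries ℚ) ^ (2 * (i + 1))))
      = ((X : PowerSeries ℚ) ^ (2 * k * l - l ^ 2) *
          ∏ i ∈ Finset.range (k - l), (1 + (X : PowerSeries ℚ) ^ (2 * i + 1))) *
        ((PowerSeries.mk fun n => (SCGF.Bcount l n : ℚ)) *
          ∏ i ∈ Finset.range l, (1 - (X : PowerSeries ℚ) ^ (2 * (i + 1)))) := by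
        ring
    _ = (X : PowerSeries ℚ) ^ (2 * k * l - l ^ 2) *
        ∏ i ∈ Finset.range (k - l), (1 + (X : PowerSeries ℚ) ^ (2 * i + 1)) := by
        rw [hB, mul_one]
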